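/- Let 1 < p < ∞ and 1 < C₁ ≤ C₂ < ∞. For h(z) = 1/(1−z) and the Taylor polynomial block S_{n₁,n₂}h(z) = Σ_{k=n₁}^{n₂−1} z^k, one has ‖S_{n₁,n₂}h‖_{H^p} ≍ n₂^{1−1/p} uniformly for all natural numbers n₁ < n₂ with C₁ ≤ n₂/n₁ ≤ C₂; that is, there are constants depending only on p, C₁, C₂ bounding the ratio above and below. -/

import Mathlib

/-!
Upper bound: for `‖z‖ ≤ 1` the block `S(z) = ∑_{n₁ ≤ k < n₂} z^k` satisfies both `‖S(z)‖ ≤ n₂`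
and `‖S(z)‖ ‖1 - z‖ ≤ 2`, while `‖1 - r e^{iθ}‖` is at least a multiple of the distance of `θ`
to `{0, 2π}`. Hence `‖S‖^p ≤ (3 n₂)^p (1 + n₂ θ / 2π)^{-p}` up to the symmetry `θ ↦ 2π - θ`,
whose integral is `O(n₂^{p-1})`.

Lower bound: at radius `r = 1 - 1/(2 n₂)` we have `r^k ≥ 1/2` for `k ≤ n₂`, and for
`0 ≤ θ ≤ 1/n₂` also `cos (k θ) ≥ 1/2`, so `Re S ≥ (n₂ - n₁)/4` on an arc of length `1/n₂`.
Since `n₂/n₁ ≥ C₁ > 1`, `n₂ - n₁ ≥ (1 - 1/C₁) n₂`, which gives `∫ ‖S‖^p ≳ n₂^{p-1}`.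
-/

open MeasureTheory Real

/-- The integral mean `M_p(r, f)`. -/
noncomputable def meanMp (p : ℝ) (f : ℂ → ℂ) (r : ℝ) : ℝ :=
  ((1 / (2 * π)) * ∫ θ in (0:ℝ)..2 * π,
      ‖f ((r:ℂ) * Complex.exp (θ * Complex.I))‖ ^ p) ^ (1 / p)

/-- The Hardy space norm `‖f‖_{H^p} = sup_{0<r<1} M_p(r,f)`. -/
noncomputable def HpNorm (p : ℝ) (f : ℂ → ℂ) : ℝ :=
  ⨆ r : Set.Ioo (0:ℝ) 1, meanMp p f r

open Finset intervalIntegral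

lemma norm_one_sub_ofReal_mul_exp_sq (r θ : ℝ) :
    ‖1 - (r : ℂ) * Complex.exp (θ * Complex.I)‖ ^ 2 = (1 - r) ^ 2 + 2 * r * (1 - cos θ) := by
  rw [Complex.sq_norm, Complex.normSq_apply]
  simp only [Complex.sub_re, Complex.sub_im, Complex.one_re, Complex.one_im,
    Complex.re_ofReal_mul, Complex.im_ofReal_mul, Complex.exp_ofReal_mul_I_re,
    Complex.exp_ofReal_mul_I_im]
  linear_combination r ^ 2 * sin_sq_add_cos_sq θ

lemma min_le_two_pi_mul_norm_one_sub {r θ : ℝ} (hr : 0 ≤ r) (hθ : θ ∈ Set.Icc 0 (2 * π)) :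
    min θ (2 * π - θ) ≤ 2 * π * ‖1 - (r : ℂ) * Complex.exp (θ * Complex.I)‖ := by
  set m := min θ (2 * π - θ)
  have hm : 0 ≤ m := le_min hθ.1 (by linarith [hθ.2])
  have hmπ : m ≤ π := by linarith [min_le_left θ (2 * π - θ), min_le_right θ (2 * π - θ)]
  have hcos : cos θ ≤ 1 - 2 / π ^ 2 * m ^ 2 := by
    have hcos_m : cos m = cos θ := by
      rcases min_choice θ (2 * π - θ) with h | h <;> simp only [m, h, cos_two_pi_sub]
    rw [← hcos_m]
    exact cos_le_one_sub_mul_cos_sq (abs_le.2 ⟨by linarith, hmπ⟩)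
  have hnorm : 1 - cos θ ≤ 8 * ‖1 - (r : ℂ) * Complex.exp (θ * Complex.I)‖ ^ 2 := by
    rw [norm_one_sub_ofReal_mul_exp_sq]
    -- `2 r ≥ 1` or `(1 - r) ^ 2 ≥ 1 / 4 ≥ (1 - cos θ) / 8`
    rcases le_or_gt (1 / 2) r with h | h <;> nlinarith [cos_le_one θ, neg_one_le_cos θ]
  refine (pow_le_pow_iff_left₀ hm (by positivity) two_ne_zero).1 ?_
  calc m ^ 2 = π ^ 2 / 2 * (2 / π ^ 2 * m ^ 2) := by field_simp
    _ ≤ π ^ 2 / 2 * (1 - cos θ) := by gcongr; linarith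
    _ ≤ π ^ 2 / 2 * (8 * ‖1 - (r : ℂ) * Complex.exp (θ * Complex.I)‖ ^ 2) := by gcongr
    _ = _ := by ring

lemma norm_sum_Ico_pow_le {z : ℂ} (hz : ‖z‖ ≤ 1) (n₁ n₂ : ℕ) :
    ‖∑ k ∈ Ico n₁ n₂, z ^ k‖ ≤ n₂ :=
  calc ‖∑ k ∈ Ico n₁ n₂, z ^ k‖ ≤ ∑ k ∈ Ico n₁ n₂, ‖z‖ ^ k :=
        norm_sum_le_of_le _ fun k _ ↦ (norm_pow z k).le
    _ ≤ ∑ _k ∈ Ico n₁ n₂, (1 : ℝ) := sum_le_sum fun k _ ↦ pow_le_one₀ (norm_nonneg z) hz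
    _ ≤ n₂ := by simp

lemma norm_sum_Ico_pow_mul_norm_one_sub_le {z : ℂ} (hz : ‖z‖ ≤ 1) (n₁ n₂ : ℕ) :
    ‖∑ k ∈ Ico n₁ n₂, z ^ k‖ * ‖1 - z‖ ≤ 2 := by
  rcases le_total n₁ n₂ with h | h
  · rw [← norm_neg (1 - z), neg_sub, ← norm_mul, geom_sum_Ico_mul z h]
    calc ‖z ^ n₂ - z ^ n₁‖ ≤ ‖z‖ ^ n₂ + ‖z‖ ^ n₁ := by
          simpa only [norm_pow] using norm_sub_le (z ^ n₂) (z ^ n₁)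
      _ ≤ 1 + 1 := add_le_add (pow_le_one₀ (norm_nonneg z) hz) (pow_le_one₀ (norm_nonneg z) hz)
      _ = 2 := one_add_one_eq_two
  · simp [Ico_eq_empty_of_le h]

lemma norm_sum_Ico_pow_rpow_le {p r θ : ℝ} (hp : 0 ≤ p) (hr : r ∈ Set.Icc 0 1)
    (hθ : θ ∈ Set.Icc 0 (2 * π)) (n₁ n₂ : ℕ) :
    ‖∑ k ∈ Ico n₁ n₂, ((r : ℂ) * Complex.exp (θ * Complex.I)) ^ k‖ ^ p ≤
      (3 * n₂) ^ p * ((1 + n₂ / (2 * π) * θ) ^ (-p) + (1 + n₂ / (2 * π) * (2 * π - θ)) ^ (-p)) := by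
  set z := (r : ℂ) * Complex.exp (θ * Complex.I)
  set S := ‖∑ k ∈ Ico n₁ n₂, z ^ k‖
  set c := (n₂ : ℝ) / (2 * π)
  have hz : ‖z‖ ≤ 1 := by simpa [z, abs_of_nonneg hr.1] using hr.2
  have hc : 0 ≤ c := by positivity
  have hθ' : 0 ≤ 2 * π - θ := by linarith [hθ.2]
  have hm : 0 ≤ min θ (2 * π - θ) := le_min hθ.1 hθ'
  have hS : S * (1 + c * min θ (2 * π - θ)) ≤ 3 * n₂ := by
    have h_far : S * (c * min θ (2 * π - θ)) ≤ n₂ * 2 :=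
      calc S * (c * min θ (2 * π - θ)) ≤ S * (c * (2 * π * ‖1 - z‖)) := by
            gcongr; exact min_le_two_pi_mul_norm_one_sub hr.1 hθ
        _ = n₂ * (S * ‖1 - z‖) := by simp only [c]; field_simp
        _ ≤ n₂ * 2 := by gcongr; exact norm_sum_Ico_pow_mul_norm_one_sub_le hz n₁ n₂
    linarith [norm_sum_Ico_pow_le hz n₁ n₂]
  have hpos : 0 < 1 + c * min θ (2 * π - θ) := by positivity
  calc S ^ p ≤ (3 * n₂ / (1 + c * min θ (2 * π - θ))) ^ p :=
        rpow_le_rpow (norm_nonneg _) ((le_div_iff₀ hpos).2 hS) hp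
    _ = (3 * n₂) ^ p * (1 + c * min θ (2 * π - θ)) ^ (-p) := by
        rw [div_rpow (by positivity) hpos.le, rpow_neg hpos.le, div_eq_mul_inv]
    _ ≤ _ := by
        gcongr
        rcases min_choice θ (2 * π - θ) with h | h <;> rw [h]
        · linarith [rpow_nonneg (by positivity : 0 ≤ 1 + c * (2 * π - θ)) (-p)]
        · linarith [rpow_nonneg (by linarith [mul_nonneg hc hθ.1] : 0 ≤ 1 + c * θ) (-p)]

lemma integral_one_add_mul_rpow_neg_le {b c p : ℝ} (hb : 0 ≤ b) (hc : 0 < c) (hp : 1 < p) :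
    ∫ x in (0 : ℝ)..b, (1 + c * x) ^ (-p) ≤ 1 / (c * (p - 1)) := by
  have h0 : (0 : ℝ) ∉ Set.uIcc 1 (1 + c * b) := by
    rw [Set.uIcc_of_le (by nlinarith)]; exact fun h ↦ by linarith [h.1]
  rw [integral_comp_add_mul (fun x ↦ x ^ (-p)) hc.ne', mul_zero, add_zero,
    integral_rpow (Or.inr ⟨by linarith, h0⟩), one_rpow, smul_eq_mul]
  calc c⁻¹ * (((1 + c * b) ^ (-p + 1) - 1) / (-p + 1))
      = (1 - (1 + c * b) ^ (-p + 1)) / (c * (p - 1)) := by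
        field_simp [show -p + 1 ≠ 0 by linarith, show p - 1 ≠ 0 by linarith]; ring
    _ ≤ 1 / (c * (p - 1)) := by
        gcongr; linarith [rpow_nonneg (by nlinarith : 0 ≤ 1 + c * b) (-p + 1)]

lemma integral_norm_sum_Ico_pow_rpow_le {p r : ℝ} (hp : 1 < p) (hr : r ∈ Set.Icc 0 1)
    (n₁ : ℕ) {n₂ : ℕ} (hn : 0 < n₂) :
    ∫ θ in (0 : ℝ)..2 * π, ‖∑ k ∈ Ico n₁ n₂, ((r : ℂ) * Complex.exp (θ * Complex.I)) ^ k‖ ^ p ≤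
      4 * π * 3 ^ p / (p - 1) * (n₂ : ℝ) ^ (p - 1) := by
  have hn' : (0 : ℝ) < n₂ := Nat.cast_pos.2 hn
  set c := (n₂ : ℝ) / (2 * π)
  have hc : 0 < c := by positivity
  set g : ℝ → ℝ := fun x ↦ (1 + c * x) ^ (-p)
  have hg : ContinuousOn g (Set.uIcc 0 (2 * π)) := by
    refine ContinuousOn.rpow_const (by fun_prop) fun x hx ↦ Or.inl ?_
    rw [Set.uIcc_of_le (by positivity)] at hx
    nlinarith [hx.1]
  have hg' : ContinuousOn (fun x ↦ g (2 * π - x)) (Set.uIcc 0 (2 * π)) := by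
    refine hg.comp (by fun_prop) fun x hx ↦ ?_
    rw [Set.uIcc_of_le (by positivity)] at hx ⊢
    constructor <;> linarith [hx.1, hx.2]
  calc _ ≤ ∫ θ in (0 : ℝ)..2 * π, (3 * n₂ : ℝ) ^ p * (g θ + g (2 * π - θ)) := by
        refine integral_mono_on (by positivity)
          (Continuous.intervalIntegrable (by fun_prop (disch := positivity)) _ _)
          ((hg.add hg').intervalIntegrable.const_mul _) fun θ hθ ↦ ?_
        exact norm_sum_Ico_pow_rpow_le (by linarith) hr hθ n₁ n₂
    _ = (3 * n₂ : ℝ) ^ p * (2 * ∫ θ in (0 : ℝ)..2 * π, g θ) := by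
        rw [intervalIntegral.integral_const_mul,
          integral_add hg.intervalIntegrable hg'.intervalIntegrable, integral_comp_sub_left g,
          sub_self, sub_zero]
        ring
    _ ≤ (3 * n₂ : ℝ) ^ p * (2 * (1 / (c * (p - 1)))) := by
        gcongr; exact integral_one_add_mul_rpow_neg_le (by positivity) hc hp
    _ = 4 * π * 3 ^ p / (p - 1) * (n₂ : ℝ) ^ (p - 1) := by
        rw [mul_rpow (by norm_num) hn'.le, rpow_sub_one hn'.ne']
        simp only [c]
        field_simp
        norm_num

lemma mul_rpow_sub_one_rpow_one_div {p A x : ℝ} (hp : p ≠ 0) (hA : 0 ≤ A) (hx : 0 ≤ x) :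
    (A * x ^ (p - 1)) ^ (1 / p) = A ^ (1 / p) * x ^ (1 - 1 / p) := by
  rw [mul_rpow hA (rpow_nonneg hx _), ← rpow_mul hx, sub_mul, one_mul, mul_one_div_cancel hp]

section MeanBounds

variable {p r B : ℝ} {f : ℂ → ℂ}

lemma meanMp_le_of_integral_le (hp : 0 < p)
    (h : ∫ θ in (0 : ℝ)..2 * π, ‖f ((r : ℂ) * Complex.exp (θ * Complex.I))‖ ^ p ≤ B) :
    meanMp p f r ≤ (B / (2 * π)) ^ (1 / p) := by
  refine rpow_le_rpow (mul_nonneg (by positivity)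
    (integral_nonneg two_pi_pos.le fun θ _ ↦ by positivity)) ?_ (by positivity)
  rw [one_div_mul_eq_div]
  gcongr

lemma le_meanMp_of_le_integral (hp : 0 < p) (hB : 0 ≤ B)
    (h : B ≤ ∫ θ in (0 : ℝ)..2 * π, ‖f ((r : ℂ) * Complex.exp (θ * Complex.I))‖ ^ p) :
    (B / (2 * π)) ^ (1 / p) ≤ meanMp p f r := by
  refine rpow_le_rpow (by positivity) ?_ (by positivity)
  rw [one_div_mul_eq_div]
  gcongr

end MeanBounds

lemma meanMp_sum_Ico_le {p r : ℝ} (hp : 1 < p) (hr : r ∈ Set.Icc 0 1) (n₁ : ℕ) {n₂ : ℕ}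
    (hn : 0 < n₂) :
    meanMp p (fun z ↦ ∑ k ∈ Ico n₁ n₂, z ^ k) r ≤
      (2 * 3 ^ p / (p - 1)) ^ (1 / p) * (n₂ : ℝ) ^ (1 - 1 / p) := by
  calc _ ≤ (4 * π * 3 ^ p / (p - 1) * (n₂ : ℝ) ^ (p - 1) / (2 * π)) ^ (1 / p) :=
        meanMp_le_of_integral_le (f := fun z ↦ ∑ k ∈ Ico n₁ n₂, z ^ k) (by linarith)
          (integral_norm_sum_Ico_pow_rpow_le hp hr n₁ hn)
    _ = (2 * 3 ^ p / (p - 1) * (n₂ : ℝ) ^ (p - 1)) ^ (1 / p) := by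
        congr 1; field_simp; ring
    _ = _ := mul_rpow_sub_one_rpow_one_div (by linarith) (by positivity) n₂.cast_nonneg

lemma bddAbove_meanMp_sum_Ico {p : ℝ} (hp : 1 < p) (n₁ : ℕ) {n₂ : ℕ} (hn : 0 < n₂) :
    BddAbove (Set.range fun r : Set.Ioo (0 : ℝ) 1 ↦ meanMp p (fun z ↦ ∑ k ∈ Ico n₁ n₂, z ^ k) r) :=
  ⟨_, Set.forall_mem_range.2 fun r ↦ meanMp_sum_Ico_le hp (Set.Ioo_subset_Icc_self r.2) n₁ hn⟩

lemma HpNorm_sum_Ico_le {p : ℝ} (hp : 1 < p) (n₁ : ℕ) {n₂ : ℕ} (hn : 0 < n₂) :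
    HpNorm p (fun z ↦ ∑ k ∈ Ico n₁ n₂, z ^ k) ≤
      (2 * 3 ^ p / (p - 1)) ^ (1 / p) * (n₂ : ℝ) ^ (1 - 1 / p) := by
  have := Set.nonempty_Ioo_subtype (zero_lt_one' ℝ)
  exact ciSup_le fun r ↦ meanMp_sum_Ico_le hp (Set.Ioo_subset_Icc_self r.2) n₁ hn

lemma one_sub_one_div_two_mul_mem_Ioo {n : ℕ} (hn : 0 < n) :
    1 - 1 / (2 * n : ℝ) ∈ Set.Ioo 0 1 := by
  have : 1 / (2 * n : ℝ) < 1 :=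
    (div_lt_one (by positivity)).2 (by linarith [Nat.one_le_cast (α := ℝ) |>.2 hn])
  constructor <;> linarith [show 0 < 1 / (2 * n : ℝ) by positivity]

lemma one_half_le_one_sub_one_div_two_mul_pow {n k : ℕ} (hk : k ≤ n) :
    1 / 2 ≤ (1 - 1 / (2 * n : ℝ)) ^ k := by
  rcases Nat.eq_zero_or_pos n with rfl | hn
  · norm_num [Nat.le_zero.1 hk]
  have hε : 0 ≤ 1 / (2 * n : ℝ) := by positivity
  have hε' : 1 / (2 * n : ℝ) ≤ 1 / 2 := by gcongr; linarith [Nat.one_le_cast (α := ℝ) |>.2 hn]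
  have hbernoulli := one_add_mul_le_pow (by linarith : -2 ≤ -(1 / (2 * n : ℝ))) n
  rw [← sub_eq_add_neg] at hbernoulli
  calc (1 : ℝ) / 2 = 1 + n * -(1 / (2 * n : ℝ)) := by field_simp; ring
    _ ≤ (1 - 1 / (2 * n : ℝ)) ^ n := hbernoulli
    _ ≤ _ := pow_le_pow_of_le_one (by linarith) (by linarith) hk

lemma sub_div_four_le_norm_sum_Ico_pow {r θ : ℝ} {n₁ n₂ : ℕ} (hr : r ∈ Set.Icc 0 1)
    (hrn : 1 / 2 ≤ r ^ n₂) (hθ : θ ∈ Set.Icc 0 (1 / (n₂ : ℝ))) :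
    ((n₂ : ℝ) - n₁) / 4 ≤ ‖∑ k ∈ Ico n₁ n₂, ((r : ℂ) * Complex.exp (θ * Complex.I)) ^ k‖ := by
  have hterm : ∀ k ∈ Ico n₁ n₂, 1 / 4 ≤ (((r : ℂ) * Complex.exp (θ * Complex.I)) ^ k).re := by
    intro k hk
    have hk : k < n₂ := (mem_Ico.1 hk).2
    rw [mul_pow, ← Complex.exp_nat_mul, ← Complex.ofReal_pow,
      show (k : ℂ) * (θ * Complex.I) = ((k * θ : ℝ) : ℂ) * Complex.I by push_cast; ring,
      Complex.re_ofReal_mul, Complex.exp_ofReal_mul_I_re]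
    have hrk : 1 / 2 ≤ r ^ k := hrn.trans (pow_le_pow_of_le_one hr.1 hr.2 hk.le)
    have hkθ : k * θ ≤ 1 :=
      calc k * θ ≤ n₂ * (1 / n₂) := mul_le_mul (by exact_mod_cast hk.le) hθ.2 hθ.1 (by positivity)
        _ ≤ 1 := by rw [mul_one_div]; exact div_self_le_one _
    have hcos : 1 / 2 ≤ cos (k * θ) := by
      nlinarith [one_sub_sq_div_two_le_cos (x := k * θ), mul_nonneg k.cast_nonneg hθ.1]
    nlinarith
  calc ((n₂ : ℝ) - n₁) / 4 ≤ #(Ico n₁ n₂) * (1 / 4) := by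
        rw [Nat.card_Ico]
        have : (n₂ : ℝ) ≤ (n₂ - n₁ : ℕ) + n₁ := by exact_mod_cast le_tsub_add
        linarith
    _ = ∑ _k ∈ Ico n₁ n₂, (1 / 4 : ℝ) := by rw [sum_const, nsmul_eq_mul]
    _ ≤ ∑ k ∈ Ico n₁ n₂, (((r : ℂ) * Complex.exp (θ * Complex.I)) ^ k).re := sum_le_sum hterm
    _ = (∑ k ∈ Ico n₁ n₂, ((r : ℂ) * Complex.exp (θ * Complex.I)) ^ k).re :=
        (Complex.re_sum _ _).symm
    _ ≤ _ := Complex.re_le_norm _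

lemma le_integral_norm_sum_Ico_pow_rpow {p : ℝ} (hp : 0 ≤ p) {n₁ n₂ : ℕ} (hn : 0 < n₂)
    (h : n₁ ≤ n₂) :
    (((n₂ : ℝ) - n₁) / 4) ^ p / n₂ ≤ ∫ θ in (0 : ℝ)..2 * π,
      ‖∑ k ∈ Ico n₁ n₂, (((1 - 1 / (2 * n₂) : ℝ) : ℂ) * Complex.exp (θ * Complex.I)) ^ k‖ ^ p := by
  set r : ℝ := 1 - 1 / (2 * n₂)
  have hn' : (1 : ℝ) ≤ n₂ := Nat.one_le_cast.2 hn
  have hr : r ∈ Set.Icc 0 1 := Set.Ioo_subset_Icc_self (one_sub_one_div_two_mul_mem_Ioo hn)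
  have hF : Continuous fun θ : ℝ ↦
      ‖∑ k ∈ Ico n₁ n₂, ((r : ℂ) * Complex.exp (θ * Complex.I)) ^ k‖ ^ p := by
    fun_prop (disch := exact hp)
  have h_sub : (0 : ℝ) ≤ ((n₂ : ℝ) - n₁) / 4 := by
    have : (n₁ : ℝ) ≤ n₂ := by exact_mod_cast h
    linarith
  have h_short : 1 / (n₂ : ℝ) ≤ 2 * π := by
    linarith [(div_le_one (by positivity : (0 : ℝ) < n₂)).2 hn', pi_gt_three]
  calc (((n₂ : ℝ) - n₁) / 4) ^ p / n₂ = ∫ θ in (0 : ℝ)..1 / n₂, (((n₂ : ℝ) - n₁) / 4) ^ p := by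
        rw [intervalIntegral.integral_const, smul_eq_mul, sub_zero, one_div_mul_eq_div]
    _ ≤ ∫ θ in (0 : ℝ)..1 / n₂,
          ‖∑ k ∈ Ico n₁ n₂, ((r : ℂ) * Complex.exp (θ * Complex.I)) ^ k‖ ^ p :=
        integral_mono_on (by positivity) intervalIntegrable_const (hF.intervalIntegrable _ _)
          fun θ hθ ↦ rpow_le_rpow h_sub (sub_div_four_le_norm_sum_Ico_pow hr
            (one_half_le_one_sub_one_div_two_mul_pow le_rfl) hθ) hp
    _ ≤ _ := integral_mono_interval le_rfl (by positivity) h_short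
          (Filter.Eventually.of_forall fun θ ↦ by positivity) (hF.intervalIntegrable _ _)

lemma le_HpNorm_sum_Ico {p δ : ℝ} (hp : 1 < p) (hδ : 0 ≤ δ) {n₁ n₂ : ℕ} (hn : 0 < n₂)
    (h : δ * n₂ ≤ n₂ - n₁) :
    ((δ / 4) ^ p / (2 * π)) ^ (1 / p) * (n₂ : ℝ) ^ (1 - 1 / p) ≤
      HpNorm p (fun z ↦ ∑ k ∈ Ico n₁ n₂, z ^ k) := by
  have hn' : (0 : ℝ) < n₂ := Nat.cast_pos.2 hn
  have h_sub : (0 : ℝ) ≤ ((n₂ : ℝ) - n₁) / 4 := by nlinarith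
  have h12 : n₁ ≤ n₂ := Nat.cast_le.1 (by linarith : (n₁ : ℝ) ≤ n₂)
  calc _ = ((δ / 4) ^ p / (2 * π) * (n₂ : ℝ) ^ (p - 1)) ^ (1 / p) :=
        (mul_rpow_sub_one_rpow_one_div (by linarith) (by positivity) hn'.le).symm
    _ = ((δ * n₂ / 4) ^ p / n₂ / (2 * π)) ^ (1 / p) := by
        rw [show δ * n₂ / 4 = δ / 4 * n₂ by ring, mul_rpow (by positivity) hn'.le,
          rpow_sub_one hn'.ne']
        congr 1
        field_simp
    _ ≤ ((((n₂ : ℝ) - n₁) / 4) ^ p / n₂ / (2 * π)) ^ (1 / p) := by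
        gcongr
    _ ≤ meanMp p (fun z ↦ ∑ k ∈ Ico n₁ n₂, z ^ k) (1 - 1 / (2 * n₂)) :=
        le_meanMp_of_le_integral (f := fun z ↦ ∑ k ∈ Ico n₁ n₂, z ^ k) (by linarith)
          (div_nonneg (rpow_nonneg h_sub p) hn'.le)
          (le_integral_norm_sum_Ico_pow_rpow (by linarith) hn h12)
    _ ≤ _ := le_ciSup (bddAbove_meanMp_sum_Ico hp n₁ hn) ⟨_, one_sub_one_div_two_mul_mem_Ioo hn⟩

theorem stmt6_general (p C₁ C₂ : ℝ) (hp : 1 < p) (hC₁ : 1 < C₁) :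
    ∃ c₁ c₂ : ℝ, 0 < c₁ ∧ 0 < c₂ ∧
      ∀ n₁ n₂ : ℕ, 0 < n₁ → C₁ ≤ (n₂ : ℝ) / (n₁ : ℝ) → (n₂ : ℝ) / (n₁ : ℝ) ≤ C₂ →
        c₁ * (n₂ : ℝ) ^ ((1:ℝ) - 1 / p) ≤
            HpNorm p (fun z => ∑ k ∈ Finset.Ico n₁ n₂, z ^ k) ∧
          HpNorm p (fun z => ∑ k ∈ Finset.Ico n₁ n₂, z ^ k) ≤
            c₂ * (n₂ : ℝ) ^ ((1:ℝ) - 1 / p) := by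
  set δ := 1 - 1 / C₁
  have hδ : 0 < δ := sub_pos.2 ((div_lt_one (by linarith)).2 hC₁)
  have hp1 : 0 < p - 1 := by linarith
  refine ⟨((δ / 4) ^ p / (2 * π)) ^ (1 / p), (2 * 3 ^ p / (p - 1)) ^ (1 / p), by positivity,
    by positivity, fun n₁ n₂ hn₁ hC₁n _ ↦ ?_⟩
  have hn₁' : (0 : ℝ) < n₁ := Nat.cast_pos.2 hn₁
  have hC₁n : C₁ * n₁ ≤ n₂ := (le_div_iff₀ hn₁').1 hC₁n
  have hn₂ : 0 < n₂ := Nat.cast_pos.1 (by nlinarith : (0 : ℝ) < n₂)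
  refine ⟨le_HpNorm_sum_Ico hp hδ.le hn₂ ?_, HpNorm_sum_Ico_le hp n₁ hn₂⟩
  have : (n₁ : ℝ) ≤ n₂ / C₁ := (le_div_iff₀ (by linarith)).2 (by linarith)
  calc δ * n₂ = n₂ - n₂ / C₁ := by simp only [δ]; ring
    _ ≤ n₂ - n₁ := by linarith

theorem stmt6 (p C₁ C₂ : ℝ) (hp : 1 < p) (hC₁ : 1 < C₁) (hC : C₁ ≤ C₂) :
    ∃ c₁ c₂ : ℝ, 0 < c₁ ∧ 0 < c₂ ∧
      ∀ n₁ n₂ : ℕ, 0 < n₁ → C₁ ≤ (n₂ : ℝ) / (n₁ : ℝ) → (n₂ : ℝ) / (n₁ : ℝ) ≤ C₂ →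
        c₁ * (n₂ : ℝ) ^ ((1:ℝ) - 1 / p) ≤
            HpNorm p (fun z => ∑ k ∈ Finset.Ico n₁ n₂, z ^ k) ∧
          HpNorm p (fun z => ∑ k ∈ Finset.Ico n₁ n₂, z ^ k) ≤
            c₂ * (n₂ : ℝ) ^ ((1:ℝ) - 1 / p) :=
  stmt6_general p C₁ C₂ hp hC₁
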